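/- If T is a spider of order n ≥ 3, then γ_dR(T) ≤ n + 1. -/

import Mathlib

/-- A double Roman dominating function on a simple graph `G`:
values in `{0,1,2,3}`, every vertex with value `0` has two neighbors with value `2`
or one neighbor with value `3`, and every vertex with value `1` has a neighbor with
value at least `2`. -/
def IsDRDF {V : Type*} (G : SimpleGraph V) (f : V → ℕ) : Prop :=
  (∀ v, f v ≤ 3) ∧
  (∀ v, f v = 0 →
    (∃ u w, u ≠ w ∧ G.Adj v u ∧ G.Adj v w ∧ f u = 2 ∧ f w = 2) ∨ ∃ u, G.Adj v u ∧ f u = 3) ∧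
  (∀ v, f v = 1 → ∃ u, G.Adj v u ∧ 2 ≤ f u)

/-- The double Roman domination number: the minimum weight of a DRDF. -/
noncomputable def gammaDR {V : Type*} [Fintype V] (G : SimpleGraph V) : ℕ :=
  sInf {w | ∃ f, IsDRDF G f ∧ ∑ v, f v = w}

/-!
Root the spider at its branch vertex `c` (any vertex if it is a path), so that every other vertex
lies on a leg, a path hanging from `c`. Give `c` the value 2 and label the vertices of each leg by
their height `h`, the distance to the end of the leg: value 3 where `h ≡ 1 (mod 3)` and 0
elsewhere, except that the one or two vertices of the leg nearest to `c` left over by this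
pattern get 1, respectively 0 and 2. Every 0 then sees a 3 or two 2's. For the weight, every 3 is
paid for by its parent and its child, and every other 2 by its parent, all of value 0. Distinct
vertices have distinct parents (vertices other than `c` have at most one child) and distinct
children (parents are unique in a tree), and parents and children used here are told apart by
`h mod 3`; hence the weight is at most `n + 1`.
-/

section

open Finset

namespace SimpleGraph

variable {V : Type*} {G : SimpleGraph V} {c u v w : V}

theorem Connected.exists_adj_dist_add_one_eq (hG : G.Connected) (hvw : v ≠ w) :
    ∃ u, G.Adj v u ∧ G.dist u w + 1 = G.dist v w := by
  obtain ⟨p, hp⟩ := (hG v w).exists_walk_length_eq_dist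
  cases p with
  | nil => exact absurd rfl hvw
  | @cons _ u _ h q =>
    have hqu : G.dist u w ≤ q.length := dist_le q
    have htri : G.dist v w ≤ G.dist v u + G.dist u w := hG.dist_triangle
    rw [dist_eq_one_iff_adj.2 h] at htri
    rw [Walk.length_cons] at hp
    exact ⟨u, h, by omega⟩

theorem Connected.exists_adj_dist_add_one_eq_dist (hG : G.Connected) (hv : v ≠ c) :
    ∃ u, G.Adj v u ∧ G.dist c u + 1 = G.dist c v := by
  simpa only [dist_comm (u := c)] using hG.exists_adj_dist_add_one_eq hv

theorem IsTree.eq_of_adj_of_dist_add_one_eq (hT : G.IsTree) {u' : V}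
    (h : G.Adj u v) (hu : G.dist c u + 1 = G.dist c v)
    (h' : G.Adj u' v) (hu' : G.dist c u' + 1 = G.dist c v) : u = u' := by
  classical
  obtain ⟨q, hq, -⟩ := (hT.connected c v).exists_path_of_dist
  have penultimate_eq : ∀ x, (h : G.Adj x v) → G.dist c x + 1 = G.dist c v →
      x = q.penultimate := by
    intro x h hx
    obtain ⟨p, hp, hpx⟩ := (hT.connected c x).exists_path_of_dist
    have hv : v ∉ p.support := fun hs => by
      have := (dist_le (p.takeUntil v hs)).trans (p.length_takeUntil_le_length hs)
      omega
    have hqp : q = p.concat h :=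
      congrArg Subtype.val ((hT.isAcyclic.subsingleton_path c v).elim ⟨q, hq⟩ ⟨_, hp.concat hv h⟩)
    rw [hqp, Walk.penultimate_concat]
  exact (penultimate_eq u h hu).trans (penultimate_eq u' h' hu').symm

/-- The height of `v` in `G` rooted at `c`: its largest distance to a vertex `w` having a shortest
`c`–`w` path through `v`. -/
noncomputable def rootedHeight (G : SimpleGraph V) (c v : V) : ℕ :=
  sSup (G.dist v '' {w | G.dist c w = G.dist c v + G.dist v w})

variable [Finite V]

theorem Connected.eq_of_adj_of_dist_eq_add_one (hG : G.Connected) {u' : V} (hv : v ≠ c)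
    (hdeg : {x | G.Adj v x}.ncard ≤ 2)
    (h : G.Adj v u) (hu : G.dist c u = G.dist c v + 1)
    (h' : G.Adj v u') (hu' : G.dist c u' = G.dist c v + 1) : u = u' := by
  by_contra hne
  obtain ⟨p, hp, hpd⟩ := hG.exists_adj_dist_add_one_eq_dist hv
  have : 2 < {x | G.Adj v x}.ncard := (Set.two_lt_ncard_iff (Set.toFinite _)).2
    ⟨p, u, u', hp, h, h', fun e => by subst e; omega, fun e => by subst e; omega, hne⟩
  omega

theorem dist_le_rootedHeight (hw : G.dist c w = G.dist c v + G.dist v w) :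
    G.dist v w ≤ G.rootedHeight c v :=
  le_csSup ((Set.finite_range _).subset (Set.image_subset_range _ _)).bddAbove ⟨w, hw, rfl⟩

theorem exists_dist_eq_rootedHeight (G : SimpleGraph V) (c v : V) :
    ∃ w, G.dist c w = G.dist c v + G.dist v w ∧ G.dist v w = G.rootedHeight c v :=
  Nat.sSup_mem (Set.Nonempty.image _ ⟨v, show G.dist c v = G.dist c v + G.dist v v by simp⟩)
    ((Set.finite_range _).subset (Set.image_subset_range _ _)).bddAbove

theorem Connected.rootedHeight_add_one_le (hG : G.Connected) (h : G.Adj v u)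
    (hu : G.dist c u = G.dist c v + 1) : G.rootedHeight c u + 1 ≤ G.rootedHeight c v := by
  obtain ⟨w, hw, hwu⟩ := G.exists_dist_eq_rootedHeight c u
  have hcw : G.dist c w ≤ G.dist c v + G.dist v w := hG.dist_triangle
  have hvw : G.dist v w ≤ G.dist v u + G.dist u w := hG.dist_triangle
  rw [dist_eq_one_iff_adj.2 h] at hvw
  have := dist_le_rootedHeight (G := G) (c := c) (v := v) (w := w) (by omega)
  omega

theorem IsTree.exists_adj_rootedHeight_add_one_eq (hT : G.IsTree)
    (hv : 0 < G.rootedHeight c v) :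
    ∃ u, G.Adj v u ∧ G.dist c u = G.dist c v + 1 ∧
      G.rootedHeight c u + 1 = G.rootedHeight c v := by
  obtain ⟨w, hw, hwv⟩ := G.exists_dist_eq_rootedHeight c v
  have hvw : v ≠ w := by rintro rfl; simp only [dist_self] at hwv; omega
  obtain ⟨u, h, hu⟩ := hT.connected.exists_adj_dist_add_one_eq hvw
  have hcw : G.dist c w ≤ G.dist c u + G.dist u w := hT.connected.dist_triangle
  have hdu : G.dist c u = G.dist c v + 1 := by
    rcases hT.dist_eq_dist_add_one_of_adj c h with h' | h' <;> omega
  refine ⟨u, h, hdu, le_antisymm (hT.connected.rootedHeight_add_one_le h hdu) ?_⟩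
  have := dist_le_rootedHeight (G := G) (c := c) (v := u) (w := w) (by omega)
  omega

theorem IsTree.rootedHeight_add_one_eq_of_adj (hT : G.IsTree) (hu : u ≠ c)
    (hdeg : {x | G.Adj u x}.ncard ≤ 2) (h : G.Adj u v) (hv : G.dist c v = G.dist c u + 1) :
    G.rootedHeight c v + 1 = G.rootedHeight c u := by
  obtain ⟨w, hw, hwd, hwh⟩ :=
    hT.exists_adj_rootedHeight_add_one_eq
      (Nat.zero_lt_of_lt (hT.connected.rootedHeight_add_one_le h hv))
  rwa [hT.connected.eq_of_adj_of_dist_eq_add_one hu hdeg h hv hw hwd]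

theorem IsTree.exists_adj_rootedHeight_eq_add_one (hT : G.IsTree)
    (hdeg : ∀ x, x ≠ c → {y | G.Adj x y}.ncard ≤ 2) (hv : 2 ≤ G.dist c v) :
    ∃ u, G.Adj v u ∧ u ≠ c ∧ G.dist c u + 1 = G.dist c v ∧
      G.rootedHeight c u = G.rootedHeight c v + 1 := by
  have hvc : v ≠ c := by rintro rfl; simp at hv
  obtain ⟨u, h, hu⟩ := hT.connected.exists_adj_dist_add_one_eq_dist hvc
  have huc : u ≠ c := by rintro rfl; simp only [dist_self] at hu; omega
  exact ⟨u, h, huc, hu,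
    (hT.rootedHeight_add_one_eq_of_adj huc (hdeg u huc) h.symm hu.symm).symm⟩

end SimpleGraph

open SimpleGraph

/-- The value at a vertex at distance `d` from the centre and of height `h`. -/
def spiderLabel (d h : ℕ) : ℕ :=
  if d = 0 then 2
  else if h % 3 = 1 then (if d = 1 then 0 else 3)
  else if h % 3 = 0 then (if d = 1 then 1 else if d = 2 then 2 else 0)
  else 0

theorem spiderLabel_le_three (d h : ℕ) : spiderLabel d h ≤ 3 := by
  unfold spiderLabel; split_ifs <;> omega

noncomputable def spiderDRDF {V : Type*} (T : SimpleGraph V) (c v : V) : ℕ :=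
  spiderLabel (T.dist c v) (T.rootedHeight c v)

variable {V : Type*} {T : SimpleGraph V} {c : V}

theorem gammaDR_le_sum [Fintype V] {f : V → ℕ} (hf : IsDRDF T f) : gammaDR T ≤ ∑ v, f v :=
  Nat.sInf_le ⟨f, hf, rfl⟩

theorem spiderDRDF_self : spiderDRDF T c c = 2 := by
  simp [spiderDRDF, spiderLabel]

theorem isDRDF_spiderDRDF [Finite V] (hT : T.IsTree)
    (hdeg : ∀ v, v ≠ c → {x | T.Adj v x}.ncard ≤ 2) : IsDRDF T (spiderDRDF T c) := by
  refine ⟨fun v => spiderLabel_le_three _ _, fun v hv => ?_, fun v hv => ?_⟩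
  · have hcases : (T.rootedHeight c v % 3 = 0 ∧ 3 ≤ T.dist c v) ∨
        (T.rootedHeight c v % 3 = 2 ∧ 1 ≤ T.dist c v) ∨
        (T.rootedHeight c v % 3 = 1 ∧ T.dist c v = 1) := by
      unfold spiderDRDF spiderLabel at hv; split_ifs at hv <;> omega
    rcases hcases with ⟨hh, hd⟩ | ⟨hh, hd⟩ | ⟨hh, hd⟩
    · obtain ⟨u, h, -, hud, huh⟩ := hT.exists_adj_rootedHeight_eq_add_one hdeg (v := v) (by omega)
      exact Or.inr ⟨u, h, by unfold spiderDRDF spiderLabel; split_ifs <;> omega⟩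
    · obtain ⟨u, h, hud, huh⟩ := hT.exists_adj_rootedHeight_add_one_eq (c := c) (v := v) (by omega)
      exact Or.inr ⟨u, h, by unfold spiderDRDF spiderLabel; split_ifs <;> omega⟩
    · obtain ⟨u, h, hud, huh⟩ := hT.exists_adj_rootedHeight_add_one_eq (c := c) (v := v) (by omega)
      have hcu : c ≠ u := by rintro rfl; simp at hud
      refine Or.inl ⟨c, u, hcu, (dist_eq_one_iff_adj.1 hd).symm, h, spiderDRDF_self, ?_⟩
      unfold spiderDRDF spiderLabel; split_ifs <;> omega
  · have hd : T.dist c v = 1 := by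
      unfold spiderDRDF spiderLabel at hv; split_ifs at hv <;> omega
    exact ⟨c, (dist_eq_one_iff_adj.1 hd).symm, spiderDRDF_self.ge⟩

theorem sum_le_card_add_one_of_card_le [Fintype V] [DecidableEq V] (f : V → ℕ)
    (hf : ∀ v, f v ≤ 3) (hc : f c ≤ 2)
    (hcard : #{v | v ≠ c ∧ 2 ≤ f v} + #{v | f v = 3} ≤ #{v | f v = 0}) :
    ∑ v, f v ≤ Fintype.card V + 1 := by
  have pointwise : ∀ v ∈ univ, f v + (if f v = 0 then 1 else 0) ≤
      1 + (if v ≠ c ∧ 2 ≤ f v then 1 else 0) + (if f v = 3 then 1 else 0) +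
        (if v = c then 1 else 0) := by
    intro v _
    have := hf v
    rcases eq_or_ne v c with rfl | hv
    · simp only [ne_eq, not_true_eq_false, false_and, if_false, if_true]; split_ifs <;> omega
    · simp only [hv, ne_eq, not_false_eq_true, true_and, if_false]; split_ifs <;> omega
  have hsum := sum_le_sum pointwise
  simp only [sum_add_distrib, sum_boole, sum_const, card_univ, smul_eq_mul, mul_one,
    filter_eq', mem_univ, if_true, card_singleton, Nat.cast_id] at hsum
  omega

theorem card_filter_two_le_spiderDRDF [Fintype V] [DecidableEq V] (hT : T.IsTree)
    (hdeg : ∀ v, v ≠ c → {x | T.Adj v x}.ncard ≤ 2) :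
    #{v | v ≠ c ∧ 2 ≤ spiderDRDF T c v} ≤
      #{v | spiderDRDF T c v = 0 ∧ T.rootedHeight c v % 3 ≠ 0} := by
  refine card_le_card_of_forall_subsingleton (fun a b => T.Adj a b ∧ T.dist c b + 1 = T.dist c a)
    (fun a ha => ?_) (fun b hb => ?_)
  · simp only [mem_filter, mem_univ, true_and] at ha ⊢
    obtain ⟨hac, ha⟩ := ha
    have hd0 := hT.connected.pos_dist_of_ne (Ne.symm hac)
    have hcase : 2 ≤ T.dist c a ∧ T.rootedHeight c a % 3 ≠ 2 := by
      unfold spiderDRDF spiderLabel at ha; split_ifs at ha <;> omega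
    obtain ⟨p, h, -, hpd, hph⟩ := hT.exists_adj_rootedHeight_eq_add_one hdeg hcase.1
    refine ⟨p, ⟨?_, by omega⟩, h, hpd⟩
    unfold spiderDRDF spiderLabel at ha ⊢; split_ifs at ha ⊢ <;> omega
  · simp only [mem_filter, mem_univ, true_and] at hb
    have hbc : b ≠ c := by rintro rfl; simp [spiderDRDF_self] at hb
    rintro a ⟨-, ha, had⟩ a' ⟨-, ha', had'⟩
    exact hT.connected.eq_of_adj_of_dist_eq_add_one hbc (hdeg b hbc) ha.symm had.symm
      ha'.symm had'.symm

theorem card_filter_three_le_spiderDRDF [Fintype V] [DecidableEq V] (hT : T.IsTree) :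
    #{v | spiderDRDF T c v = 3} ≤
      #{v | spiderDRDF T c v = 0 ∧ T.rootedHeight c v % 3 = 0} := by
  refine card_le_card_of_forall_subsingleton (fun a b => T.Adj a b ∧ T.dist c b = T.dist c a + 1)
    (fun a ha => ?_) (fun b _ => ?_)
  · simp only [mem_filter, mem_univ, true_and] at ha ⊢
    have hcase : 2 ≤ T.dist c a ∧ T.rootedHeight c a % 3 = 1 := by
      unfold spiderDRDF spiderLabel at ha; split_ifs at ha <;> omega
    obtain ⟨u, h, hud, huh⟩ := hT.exists_adj_rootedHeight_add_one_eq (c := c) (v := a) (by omega)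
    refine ⟨u, ⟨?_, by omega⟩, h, hud⟩
    unfold spiderDRDF spiderLabel; split_ifs <;> omega
  · rintro a ⟨-, ha, had⟩ a' ⟨-, ha', had'⟩
    exact hT.eq_of_adj_of_dist_add_one_eq ha had.symm ha' had'.symm

theorem sum_spiderDRDF_le [Fintype V] (hT : T.IsTree)
    (hdeg : ∀ v, v ≠ c → {x | T.Adj v x}.ncard ≤ 2) :
    ∑ v, spiderDRDF T c v ≤ Fintype.card V + 1 := by
  classical
  refine sum_le_card_add_one_of_card_le _ (fun v => spiderLabel_le_three _ _)
    spiderDRDF_self.le ?_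
  rw [← card_filter_add_card_filter_not (s := {v | spiderDRDF T c v = 0})
    (fun v => T.rootedHeight c v % 3 ≠ 0), filter_filter, filter_filter]
  simp only [not_ne_iff]
  exact add_le_add (card_filter_two_le_spiderDRDF hT hdeg) (card_filter_three_le_spiderDRDF hT)

end

theorem gammaDR_spider_le_general {V : Type*} [Fintype V] (T : SimpleGraph V)
    (hconn : T.Connected) (hacyclic : T.IsAcyclic)
    (hspider : ∀ v w, 3 ≤ {x | T.Adj v x}.ncard → 3 ≤ {x | T.Adj w x}.ncard → v = w) :
    gammaDR T ≤ Fintype.card V + 1 := by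
  have hT : T.IsTree := ⟨hconn, hacyclic⟩
  obtain ⟨c, hdeg⟩ : ∃ c, ∀ v, v ≠ c → {x | T.Adj v x}.ncard ≤ 2 := by
    by_cases hbranch : ∃ c, 3 ≤ {x | T.Adj c x}.ncard
    · obtain ⟨c, hc⟩ := hbranch
      exact ⟨c, fun v hv => by by_contra h; exact hv (hspider v c (by omega) hc)⟩
    · push Not at hbranch
      obtain ⟨c⟩ := hconn.nonempty
      exact ⟨c, fun v _ => by have := hbranch v; omega⟩
  exact (gammaDR_le_sum (isDRDF_spiderDRDF hT hdeg)).trans (sum_spiderDRDF_le hT hdeg)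

/-- If `T` is a spider (a tree with at most one vertex of degree at least `3`) of
order `n ≥ 3`, then `γ_dR(T) ≤ n + 1`. -/
theorem gammaDR_spider_le {V : Type*} [Fintype V] (T : SimpleGraph V)
    (hconn : T.Connected) (hacyclic : T.IsAcyclic)
    (hspider : ∀ v w, 3 ≤ {x | T.Adj v x}.ncard → 3 ≤ {x | T.Adj w x}.ncard → v = w)
    (hn : 3 ≤ Fintype.card V) :
    gammaDR T ≤ Fintype.card V + 1 :=
  gammaDR_spider_le_general T hconn hacyclic hspider
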